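/- arXiv:2602.23275 — 8 statements merged into one kernel-verified Lean document; each statement's English description precedes it below -/
import Mathlib

section
/- Let Γ be a simplicial graph and let Hor(Γ) be its combinatorial horoball: the graph with vertex set Γ⁽⁰⁾ × ℕ, with vertical edges joining (p,n) to (p,n+1), and horizontal edges joining (p,n) to (q,n) whenever d_Γ(p,q) ≤ 2ⁿ. Then for any two vertices x, y in Γ (i.e., at level 0), the distance in Hor(Γ) satisfies d_{Hor(Γ)}(x,y) ≥ (2/3)·log₂(d_Γ(x,y)) + 1, provided d_Γ(x,y) ≥ 2. -/
/-!
For a walk ending at `(y, m)`, the quantity `d_Γ(p, y) + 2 ^ n` at a vertex `(p, n)` of the walk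
equals `2 ^ m` at the end and at most doubles with each step back along the walk, by the triangle
inequality and `d_Γ(p, q) ≤ 2 ^ n` on horizontal edges. A first step out of `(x, 0)` reaches some
`(p, n)` with `d_Γ(x, p) + 2 ^ n ≤ 2`, so a walk of length `L` from `(x, 0)` to `(y, 0)` has
`2 d_Γ(x, y) ≤ 2 ^ L`, i.e. `log₂ d_Γ(x, y) + 1 ≤ L`.
-/

/-- The combinatorial horoball over a simplicial graph `G`: vertex set `V × ℕ`,
with vertical edges `(p,n)–(p,n+1)` and horizontal edges `(p,n)–(q,n)`
whenever `0 < d_G(p,q) ≤ 2^n`. -/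
def SimpleGraph.horoball {V : Type*} (G : SimpleGraph V) : SimpleGraph (V × ℕ) where
  Adj x y := (x.1 = y.1 ∧ (x.2 = y.2 + 1 ∨ y.2 = x.2 + 1)) ∨
    (x.2 = y.2 ∧ x.1 ≠ y.1 ∧ G.dist x.1 y.1 ≤ 2 ^ x.2)
  symm := by
    constructor
    rintro ⟨p, n⟩ ⟨q, m⟩ (⟨h1, h2⟩ | ⟨h1, h2, h3⟩)
    · exact Or.inl ⟨h1.symm, h2.symm⟩
    · refine Or.inr ⟨h1.symm, h2.symm, ?_⟩
      rw [G.dist_comm] at h3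
      rwa [← h1]
  loopless := by
    constructor
    rintro ⟨p, n⟩ (⟨-, h⟩ | ⟨-, h, -⟩)
    · omega
    · exact h rfl

namespace SimpleGraph

variable {V : Type*} {G : SimpleGraph V}

def toHoroballLevelZero (G : SimpleGraph V) : G →g G.horoball where
  toFun p := (p, 0)
  map_rel' h := Or.inr ⟨rfl, h.ne, (dist_eq_one_iff_adj.mpr h).le⟩

lemma horoball_adj_dist_add_two_pow_le {a b : V × ℕ} (h : G.horoball.Adj a b) :
    G.dist a.1 b.1 + 2 ^ a.2 ≤ 2 ^ (b.2 + 1) := by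
  obtain ⟨p, m⟩ := a
  obtain ⟨q, n⟩ := b
  change (p = q ∧ (m = n + 1 ∨ n = m + 1)) ∨ (m = n ∧ p ≠ q ∧ G.dist p q ≤ 2 ^ m) at h
  dsimp only
  rcases h with ⟨rfl, rfl | rfl⟩ | ⟨rfl, -, hd⟩
  · simp
  · simp only [dist_self, zero_add]
    exact Nat.pow_le_pow_right two_pos (by omega)
  · rw [pow_succ]
    omega

lemma horoball_adj_dist_add_two_pow_le' {a b : V × ℕ} (h : G.horoball.Adj a b) :
    G.dist a.1 b.1 + 2 ^ b.2 ≤ 2 ^ (a.2 + 1) := by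
  simpa only [dist_comm] using horoball_adj_dist_add_two_pow_le h.symm

lemma Connected.dist_add_two_pow_le_of_horoball_walk (hconn : G.Connected) {a c : V × ℕ}
    (w : G.horoball.Walk a c) : G.dist a.1 c.1 + 2 ^ a.2 ≤ 2 ^ (w.length + c.2) := by
  induction w with
  | nil => simp
  | @cons a b c h w ih =>
    have hstep := horoball_adj_dist_add_two_pow_le h
    have htri : G.dist a.1 c.1 ≤ G.dist a.1 b.1 + G.dist b.1 c.1 := hconn.dist_triangle
    rw [Walk.length_cons, add_right_comm, pow_succ]
    rw [pow_succ] at hstep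
    omega

lemma Connected.two_mul_dist_le_of_horoball_walk (hconn : G.Connected) {x y : V}
    (w : G.horoball.Walk (x, 0) (y, 0)) : 2 * G.dist x y ≤ 2 ^ w.length := by
  cases w with
  | nil => simp
  | @cons _ b _ h w =>
    have hfirst := horoball_adj_dist_add_two_pow_le' h
    have hrest := hconn.dist_add_two_pow_le_of_horoball_walk w
    have htri : G.dist x y ≤ G.dist x b.1 + G.dist b.1 y := hconn.dist_triangle
    have hb : 1 ≤ 2 ^ b.2 := Nat.one_le_two_pow
    simp only [zero_add, pow_one, add_zero] at hfirst hrest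
    rw [Walk.length_cons, pow_succ]
    omega

end SimpleGraph

lemma Real.logb_two_add_one_le_of_two_mul_le_two_pow {d : ℝ} {L : ℕ} (hd : 0 < d)
    (h : 2 * d ≤ 2 ^ L) : Real.logb 2 d + 1 ≤ L := by
  have hlog : Real.logb 2 (2 * d) ≤ L := by
    rw [Real.logb_le_iff_le_rpow one_lt_two (by positivity), Real.rpow_natCast]
    exact h
  rwa [Real.logb_mul two_ne_zero hd.ne', Real.logb_self_eq_one one_lt_two, add_comm] at hlog

/-- Lemma 1.3 (Groves–Manning): for vertices `x, y` of a connected graph `Γ`, viewed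
at level `0` of the combinatorial horoball, if `d_Γ(x,y) ≥ 2` then
`d_{Hor(Γ)}(x,y) ≥ (2/3)·log₂(d_Γ(x,y)) + 1`. -/
theorem horoball_dist_lower_bound {V : Type*} (G : SimpleGraph V)
    (hconn : G.Connected) (x y : V) (h2 : 2 ≤ G.dist x y) :
    (2 / 3 : ℝ) * Real.logb 2 (G.dist x y : ℝ) + 1 ≤
      (G.horoball.dist (x, 0) (y, 0) : ℝ) := by
  obtain ⟨w, hw⟩ :
      ∃ w : G.horoball.Walk (x, 0) (y, 0), w.length = G.horoball.dist (x, 0) (y, 0) :=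
    ((hconn x y).map G.toHoroballLevelZero).exists_walk_length_eq_dist
  have hwalk : 2 * (G.dist x y : ℝ) ≤ 2 ^ G.horoball.dist (x, 0) (y, 0) := by
    rw [← hw]
    exact_mod_cast hconn.two_mul_dist_le_of_horoball_walk w
  have hd : (1 : ℝ) ≤ G.dist x y := by exact_mod_cast one_le_two.trans h2
  have hlog_nonneg : 0 ≤ Real.logb 2 (G.dist x y : ℝ) := Real.logb_nonneg one_lt_two hd
  have hlog := Real.logb_two_add_one_le_of_two_mul_le_two_pow (by positivity) hwalk
  linarith
end

section
/- The inclusion of a connected graph Γ into its combinatorial horoball Hor(Γ) (as the level-0 vertices) is a coarse embedding: there exist functions m, M : ℝ≥0 → ℝ≥0 with m(t) → ∞ as t → ∞ such that m(d_Γ(x,y)) ≤ d_{Hor(Γ)}(x,y) ≤ M(d_Γ(x,y)) for all vertices x, y of Γ. -/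
/-!
Edges of `Hor(Γ)` change the level by at most one, and a horizontal edge at level `n` joins
points at `Γ`-distance at most `2 ^ n`. Hence a horoball path of length `n` between level-0
points never rises above level `n`, so its endpoints are at `Γ`-distance at most
`n * 2 ^ n ≤ 4 ^ n`; this gives the lower control function `t ↦ ⌈log₄ t⌉`. Conversely, every
path of `Γ` is a path of `Hor(Γ)` at level 0, so the identity is an upper control function.
-/

theorem Nat.tendsto_clog_atTop {b : ℕ} (hb : 1 < b) :
    Filter.Tendsto (Nat.clog b) Filter.atTop Filter.atTop :=
  Filter.tendsto_atTop_atTop_of_monotone (Nat.clog_monotone b)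
    fun n => ⟨b ^ n, (Nat.clog_pow b n hb).ge⟩

namespace SimpleGraph

variable {V : Type*} (G : SimpleGraph V)

def horoballLevelZero : G →g G.horoball where
  toFun v := (v, 0)
  map_rel' hab := Or.inr ⟨rfl, hab.ne, by simpa using G.dist_le hab.toWalk⟩

theorem horoball_dist_le_dist {x y : V} (h : G.Reachable x y) :
    G.horoball.dist (x, 0) (y, 0) ≤ G.dist x y := by
  obtain ⟨p, hp⟩ := h.exists_walk_length_eq_dist
  calc G.horoball.dist (x, 0) (y, 0) ≤ (p.map G.horoballLevelZero).length := G.horoball.dist_le _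
    _ = G.dist x y := by rw [Walk.length_map, hp]

variable {G}

theorem horoball_adj_snd_le {a c : V × ℕ} (h : G.horoball.Adj a c) : c.2 ≤ a.2 + 1 := by
  rcases h with ⟨-, h⟩ | ⟨h, -⟩ <;> omega

theorem dist_fst_le_of_horoball_adj {a c : V × ℕ} (h : G.horoball.Adj a c) :
    G.dist a.1 c.1 ≤ 2 ^ a.2 := by
  rcases h with ⟨h, -⟩ | ⟨-, -, h⟩
  · simp [h]
  · exact h

theorem dist_fst_le_of_horoball_walk (hconn : G.Connected) {a b : V × ℕ}
    (p : G.horoball.Walk a b) : G.dist a.1 b.1 ≤ p.length * 2 ^ (a.2 + p.length) := by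
  induction p with
  | nil => simp
  | @cons a c b h q ih =>
    have hstep : 2 ^ a.2 ≤ 2 ^ (a.2 + (q.length + 1)) :=
      Nat.pow_le_pow_right two_pos (by omega)
    have hrest : 2 ^ (c.2 + q.length) ≤ 2 ^ (a.2 + (q.length + 1)) :=
      Nat.pow_le_pow_right two_pos (by have := horoball_adj_snd_le h; omega)
    calc G.dist a.1 b.1 ≤ G.dist a.1 c.1 + G.dist c.1 b.1 := hconn.dist_triangle
      _ ≤ 2 ^ (a.2 + (q.length + 1)) + q.length * 2 ^ (a.2 + (q.length + 1)) :=
        add_le_add ((dist_fst_le_of_horoball_adj h).trans hstep)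
          (ih.trans (Nat.mul_le_mul_left _ hrest))
      _ = (q.cons h).length * 2 ^ (a.2 + (q.cons h).length) := by
        rw [Walk.length_cons]; ring

theorem dist_le_four_pow_horoball_dist (hconn : G.Connected) (x y : V) :
    G.dist x y ≤ 4 ^ G.horoball.dist (x, 0) (y, 0) := by
  have hreach : G.horoball.Reachable (x, 0) (y, 0) := (hconn x y).map G.horoballLevelZero
  obtain ⟨q, hq⟩ := hreach.exists_walk_length_eq_dist
  set n := G.horoball.dist (x, 0) (y, 0)
  calc G.dist x y ≤ n * 2 ^ n := by simpa [hq] using dist_fst_le_of_horoball_walk hconn q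
    _ ≤ 2 ^ n * 2 ^ n := Nat.mul_le_mul_right _ n.lt_two_pow_self.le
    _ = 4 ^ n := by rw [← Nat.mul_pow]

end SimpleGraph

/-- The inclusion of a connected graph `Γ` into its combinatorial horoball (as the
level-0 vertices) is a coarse embedding: there are `m, M : ℝ≥0 → ℝ≥0` with
`m(t) → ∞` such that `m(d_Γ(x,y)) ≤ d_{Hor(Γ)}(x,y) ≤ M(d_Γ(x,y))` for all
vertices `x, y` of `Γ`. -/
theorem horoball_coarse_embedding {V : Type*} (G : SimpleGraph V)
    (hconn : G.Connected) :
    ∃ m M : NNReal → NNReal, Filter.Tendsto m Filter.atTop Filter.atTop ∧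
      ∀ x y : V,
        m ((G.dist x y : ℕ) : NNReal) ≤ (G.horoball.dist (x, 0) (y, 0) : NNReal) ∧
        (G.horoball.dist (x, 0) (y, 0) : NNReal) ≤ M ((G.dist x y : ℕ) : NNReal) := by
  refine ⟨fun t => (Nat.clog 4 ⌊t⌋₊ : NNReal), id, ?_, fun x y => ⟨?_, ?_⟩⟩
  · exact tendsto_natCast_atTop_atTop.comp
      ((Nat.tendsto_clog_atTop (by norm_num)).comp tendsto_nat_floor_atTop)
  · dsimp only
    rw [Nat.floor_natCast]
    exact_mod_cast Nat.clog_le_of_le_pow (G.dist_le_four_pow_horoball_dist hconn x y)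
  · exact Nat.cast_le.mpr (G.horoball_dist_le_dist (hconn.preconnected x y))
end

section
/- In a combinatorial horoball Hor(Γ), any two vertices (p,n) and (q,n) at the same level n with 0 < d_Γ(p,q) ≤ 2ⁿ are at distance exactly 1, and consequently the distance in Hor(Γ) between any two vertices (p,0) and (q,0) is at most 2·⌈log₂(d_Γ(p,q))⌉ + 1 for d_Γ(p,q) ≥ 1. -/
namespace SimpleGraph

variable {V : Type*} (G : SimpleGraph V)

lemma horoball_adj_of_dist_le {p q : V} {n : ℕ} (hpos : 0 < G.dist p q)
    (hle : G.dist p q ≤ 2 ^ n) : G.horoball.Adj (p, n) (q, n) :=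
  Or.inr ⟨rfl, fun (h : p = q) ↦ by simp [h] at hpos, hle⟩

lemma horoball_adj_succ (p : V) (n : ℕ) : G.horoball.Adj (p, n) (p, n + 1) :=
  Or.inl ⟨rfl, Or.inr rfl⟩

lemma exists_horoball_walk_length_eq_level (p : V) (n : ℕ) :
    ∃ w : G.horoball.Walk (p, 0) (p, n), w.length = n := by
  induction n with
  | zero => exact ⟨.nil, rfl⟩
  | succ n ih =>
    obtain ⟨w, hw⟩ := ih
    exact ⟨w.concat (G.horoball_adj_succ p n), by simp [hw]⟩

end SimpleGraph

open SimpleGraph in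
theorem horoball_dist_upper_bound_general {V : Type*} (G : SimpleGraph V) :
    (∀ (p q : V) (n : ℕ), 0 < G.dist p q → G.dist p q ≤ 2 ^ n →
      G.horoball.dist (p, n) (q, n) = 1) ∧
    (∀ p q : V, 1 ≤ G.dist p q →
      G.horoball.dist (p, 0) (q, 0) ≤ 2 * Nat.clog 2 (G.dist p q) + 1) := by
  refine ⟨fun p q n hpos hle ↦ dist_eq_one_iff_adj.mpr (G.horoball_adj_of_dist_le hpos hle),
    fun p q hpos ↦ ?_⟩
  -- climb to level `k = ⌈log₂ d(p,q)⌉`, cross with one horizontal edge, and descend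
  set k := Nat.clog 2 (G.dist p q)
  have hcross : G.horoball.Adj (p, k) (q, k) :=
    G.horoball_adj_of_dist_le hpos (Nat.le_pow_clog one_lt_two _)
  obtain ⟨up, hup⟩ := G.exists_horoball_walk_length_eq_level p k
  obtain ⟨down, hdown⟩ := G.exists_horoball_walk_length_eq_level q k
  calc G.horoball.dist (p, 0) (q, 0)
      ≤ (up.append (.cons hcross down.reverse)).length := dist_le _
    _ = 2 * k + 1 := by simp only [Walk.length_append, Walk.length_cons,
        Walk.length_reverse, hup, hdown]; ring

/-- In a combinatorial horoball, two vertices `(p,n)`, `(q,n)` at the same level with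
`0 < d_Γ(p,q) ≤ 2^n` are at distance exactly `1`; consequently the distance between
`(p,0)` and `(q,0)` is at most `2⌈log₂ d_Γ(p,q)⌉ + 1` whenever `d_Γ(p,q) ≥ 1`. -/
theorem horoball_dist_upper_bound {V : Type*} (G : SimpleGraph V)
    (hconn : G.Connected) :
    (∀ (p q : V) (n : ℕ), 0 < G.dist p q → G.dist p q ≤ 2 ^ n →
      G.horoball.dist (p, n) (q, n) = 1) ∧
    (∀ p q : V, 1 ≤ G.dist p q →
      G.horoball.dist (p, 0) (q, 0) ≤ 2 * Nat.clog 2 (G.dist p q) + 1) :=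
  horoball_dist_upper_bound_general G
end

section
/- In the setting of the previous statement, for simplices Δ, Σ of X̂ one has link_{X̂}(Δ) ⊆ link_{X̂}(Σ) if and only if link_X(↓Δ) ⊆ link_X(↓Σ). -/
/-- The blowup of a simplicial graph `Ḡ` with respect to a family of bases `L v`. -/
def blowup {V : Type*} (Gbar : SimpleGraph V) (L : V → Type*) :
    SimpleGraph ((v : V) × Option (L v)) where
  Adj x y := (x.1 = y.1 ∧ x ≠ y ∧ (x.2 = none ∨ y.2 = none)) ∨ Gbar.Adj x.1 y.1
  symm := by
    constructor
    rintro x y (⟨h1, h2, h3⟩ | h)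
    · exact Or.inl ⟨h1.symm, h2.symm, h3.symm⟩
    · exact Or.inr h.symm
  loopless := by
    constructor
    rintro x (⟨-, h, -⟩ | h)
    · exact h rfl
    · exact Gbar.irrefl h

/-- The link of a set of vertices: all vertices adjacent to every member of the set. -/
def SimpleGraph.link {α : Type*} (G : SimpleGraph α) (s : Set α) : Set α :=
  {x | ∀ y ∈ s, G.Adj x y}

/-- The map `↓` from `X̂` (bases `L v × ℕ`) to `X` (bases `L v`). -/
def downMap {V : Type*} (L : V → Type*) (x : (v : V) × Option (L v × ℕ)) :
    (v : V) × Option (L v) :=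
  ⟨x.1, x.2.map Prod.fst⟩

theorem SimpleGraph.link_comap {α β : Type*} (H : SimpleGraph β) (f : α → β) (s : Set α) :
    (H.comap f).link s = f ⁻¹' H.link (f '' s) := by
  ext x
  simp [SimpleGraph.link]

section Blowup

variable {V : Type*} (Gbar : SimpleGraph V) (L : V → Type*)

theorem blowup_comap_downMap :
    (blowup Gbar L).comap (downMap L) = blowup Gbar (fun v => L v × ℕ) := by
  ext ⟨v, o⟩ ⟨w, p⟩
  by_cases hvw : v = w
  · subst hvw
    rcases o with _ | a <;> rcases p with _ | b <;>
      simp [blowup, downMap]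
  · simp [blowup, downMap, hvw]

theorem downMap_surjective : Function.Surjective (downMap L) := by
  rintro ⟨v, o⟩
  refine ⟨⟨v, o.map (·, 0)⟩, ?_⟩
  cases o <;> rfl

end Blowup

theorem blowup_down_link_subset_general {V : Type*} (Gbar : SimpleGraph V) (L : V → Type*)
    (Δ Sig : Set ((v : V) × Option (L v × ℕ))) :
    (blowup Gbar (fun v => L v × ℕ)).link Δ ⊆
        (blowup Gbar (fun v => L v × ℕ)).link Sig ↔
      (blowup Gbar L).link (downMap L '' Δ) ⊆ (blowup Gbar L).link (downMap L '' Sig) := by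
  rw [← blowup_comap_downMap, SimpleGraph.link_comap, SimpleGraph.link_comap]
  exact (downMap_surjective L).preimage_subset_preimage_iff

/-- For simplices `Δ, Σ` of `X̂`: `link_{X̂}(Δ) ⊆ link_{X̂}(Σ)` iff
`link_X(↓Δ) ⊆ link_X(↓Σ)`. -/
theorem blowup_down_link_subset {V : Type*} (Gbar : SimpleGraph V) (L : V → Type*)
    (Δ Sig : Set ((v : V) × Option (L v × ℕ)))
    (hΔ : (blowup Gbar (fun v => L v × ℕ)).IsClique Δ)
    (hSig : (blowup Gbar (fun v => L v × ℕ)).IsClique Sig) :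
    (blowup Gbar (fun v => L v × ℕ)).link Δ ⊆
        (blowup Gbar (fun v => L v × ℕ)).link Sig ↔
      (blowup Gbar L).link (downMap L '' Δ) ⊆ (blowup Gbar L).link (downMap L '' Sig) :=
  blowup_down_link_subset_general Gbar L Δ Sig
end

section
/- Every triangle-free and square-free simplicial graph has cleanish intersections: for all simplices Σ, Φ there exist simplices Π ⊇ Σ and Ψ with link(Σ) ∩ link(Φ) = link(Π) ⋆ Ψ. -/
/-- Cleanish intersections (see the paper): for all simplices `Σ, Φ` there are
simplices `Π ⊇ Σ` and `Ψ` with `link(Σ) ∩ link(Φ) = link(Π) ⋆ Ψ`. -/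
def SimpleGraph.HasCleanishIntersections {α : Type*} (G : SimpleGraph α) : Prop :=
  ∀ S Φ : Set α, S.Finite → Φ.Finite → G.IsClique S → G.IsClique Φ →
    ∃ P Ψ : Set α, P.Finite ∧ Ψ.Finite ∧ G.IsClique P ∧ G.IsClique Ψ ∧ S ⊆ P ∧
      G.link S ∩ G.link Φ = G.link P ∪ Ψ ∧
      ∀ a ∈ G.link P, ∀ b ∈ Ψ, G.Adj a b

/-- A graph is square-free if it contains no induced 4-cycle. -/
def SimpleGraph.SquareFree {α : Type*} (G : SimpleGraph α) : Prop :=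
  ¬ ∃ a b c d : α, a ≠ b ∧ a ≠ c ∧ a ≠ d ∧ b ≠ c ∧ b ≠ d ∧ c ≠ d ∧
    G.Adj a b ∧ G.Adj b c ∧ G.Adj c d ∧ G.Adj d a ∧ ¬ G.Adj a c ∧ ¬ G.Adj b d

namespace CleanishAux

open SimpleGraph

variable {α : Type*} {G : SimpleGraph α}

lemma noTri (htri : G.CliqueFree 3) {a b c : α} (hab : G.Adj a b) (hac : G.Adj a c)
    (hbc : G.Adj b c) : False := by
  classical
  exact htri {a, b, c} (SimpleGraph.is3Clique_triple_iff.mpr ⟨hab, hac, hbc⟩)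

lemma link_union (s t : Set α) : G.link (s ∪ t) = G.link s ∩ G.link t := by
  ext x
  simp [SimpleGraph.link, or_imp, forall_and]

lemma link_empty' : G.link (∅ : Set α) = Set.univ := by
  ext x; simp [SimpleGraph.link]

lemma link_edge (htri : G.CliqueFree 3) {u v : α} (huv : G.Adj u v) :
    G.link {u, v} = ∅ := by
  ext x
  simp only [SimpleGraph.link, Set.mem_setOf_eq, Set.mem_empty_iff_false, iff_false]
  intro h
  exact noTri htri (h u (by simp)) (h v (by simp)) huv

lemma clique_structure (htri : G.CliqueFree 3) {S : Set α} (hS : G.IsClique S) :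
    S = ∅ ∨ (∃ u, S = {u}) ∨ ∃ u v, G.Adj u v ∧ S = {u, v} := by
  rcases S.eq_empty_or_nonempty with h | ⟨u, hu⟩
  · exact Or.inl h
  by_cases h1 : S = {u}
  · exact Or.inr (Or.inl ⟨u, h1⟩)
  obtain ⟨v, hv, hvu⟩ : ∃ v ∈ S, v ≠ u := by
    by_contra hc
    push_neg at hc
    exact h1 (Set.eq_singleton_iff_unique_mem.mpr ⟨hu, hc⟩)
  have huv : G.Adj u v := hS hu hv hvu.symm
  refine Or.inr (Or.inr ⟨u, v, huv, ?_⟩)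
  apply Set.eq_of_subset_of_subset
  · intro w hw
    by_contra hwuv
    simp only [Set.mem_insert_iff, Set.mem_singleton_iff, not_or] at hwuv
    exact noTri htri huv (hS hu hw (Ne.symm hwuv.1)) (hS hv hw (Ne.symm hwuv.2))
  · intro w hw
    rcases hw with h | h
    · exact h ▸ hu
    · exact h ▸ hv

lemma exists_emptyLink_mem (htri : G.CliqueFree 3) (u : α) :
    ∃ P : Set α, P.Finite ∧ G.IsClique P ∧ u ∈ P ∧ G.link P = ∅ := by
  by_cases h : ∃ w, G.Adj u w
  · obtain ⟨w, hw⟩ := h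
    exact ⟨{u, w}, Set.toFinite _, SimpleGraph.isClique_pair.mpr (fun _ => hw),
      by simp, link_edge htri hw⟩
  · push_neg at h
    refine ⟨{u}, Set.finite_singleton u, SimpleGraph.isClique_singleton u, rfl, ?_⟩
    ext x
    simp only [SimpleGraph.link, Set.mem_setOf_eq, Set.mem_singleton_iff,
      Set.mem_empty_iff_false, iff_false]
    intro hx
    exact h x (hx u rfl).symm

lemma exists_emptyLink (htri : G.CliqueFree 3) {S : Set α} (hS : G.IsClique S) :
    ∃ P : Set α, P.Finite ∧ G.IsClique P ∧ S ⊆ P ∧ G.link P = ∅ := by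
  rcases clique_structure htri hS with h | ⟨u, h⟩ | ⟨u, v, huv, h⟩
  · subst h
    by_cases hα : Nonempty α
    · obtain ⟨u⟩ := hα
      obtain ⟨P, h1, h2, _, h4⟩ := exists_emptyLink_mem htri u
      exact ⟨P, h1, h2, Set.empty_subset P, h4⟩
    · refine ⟨∅, Set.finite_empty, SimpleGraph.isClique_empty, subset_rfl, ?_⟩
      ext x
      exact absurd ⟨x⟩ hα
  · subst h
    obtain ⟨P, h1, h2, h3, h4⟩ := exists_emptyLink_mem htri u
    exact ⟨P, h1, h2, Set.singleton_subset_iff.mpr h3, h4⟩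
  · subst h
    exact ⟨{u, v}, Set.toFinite _, hS, subset_rfl, link_edge htri huv⟩

lemma common_unique (htri : G.CliqueFree 3) (hsq : G.SquareFree) {u w a b : α}
    (huw : u ≠ w) (hnadj : ¬ G.Adj u w) (hau : G.Adj a u) (haw : G.Adj a w)
    (hbu : G.Adj b u) (hbw : G.Adj b w) : a = b := by
  by_contra hab
  have hnab : ¬ G.Adj a b := fun h => noTri htri h hau hbu
  exact hsq ⟨u, a, w, b, hau.ne', huw, hbu.ne', haw.ne, hab, hbw.ne',
    hau.symm, haw, hbw.symm, hbu, hnadj, hnab⟩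

end CleanishAux

/-- Every triangle-free and square-free simplicial graph has cleanish
intersections. -/
theorem triangleFree_squareFree_hasCleanishIntersections {α : Type*}
    (G : SimpleGraph α) (htri : G.CliqueFree 3) (hsq : G.SquareFree) :
    G.HasCleanishIntersections := by
  open CleanishAux in
  intro S Φ hSf hΦf hS hΦ
  rcases clique_structure htri hΦ with hΦe | ⟨w, hΦw⟩ | ⟨p, q, hpq, hΦpq⟩
  · -- Φ = ∅ : take P = S, Ψ = ∅
    subst hΦe
    exact ⟨S, ∅, hSf, Set.finite_empty, hS, SimpleGraph.isClique_empty, subset_rfl,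
      by simp [link_empty'], by simp⟩
  · -- Φ = {w}
    subst hΦw
    rcases clique_structure htri hS with hSe | ⟨u, hSu⟩ | ⟨u, v, huv, hSuv⟩
    · -- S = ∅ : take P = {w}, Ψ = ∅
      subst hSe
      exact ⟨{w}, ∅, Set.finite_singleton w, Set.finite_empty,
        SimpleGraph.isClique_singleton w, SimpleGraph.isClique_empty,
        Set.empty_subset _, by simp [link_empty'], by simp⟩
    · -- S = {u}
      subst hSu
      by_cases huw : u = w
      · subst huw
        exact ⟨{u}, ∅, Set.finite_singleton u, Set.finite_empty,
          SimpleGraph.isClique_singleton u, SimpleGraph.isClique_empty,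
          subset_rfl, by simp, by simp⟩
      by_cases hadj : G.Adj u w
      · -- P = {u, w}, Ψ = ∅
        refine ⟨{u, w}, ∅, Set.toFinite _, Set.finite_empty,
          SimpleGraph.isClique_pair.mpr (fun _ => hadj), SimpleGraph.isClique_empty,
          by simp, ?_, by simp⟩
        rw [Set.insert_eq, link_union, Set.union_empty]
      · -- u ≠ w, not adjacent
        by_cases hL : ∃ a, a ∈ G.link {u} ∩ G.link {w}
        · obtain ⟨a, hal, har⟩ := hL
          have hau : G.Adj a u := hal u rfl
          have haw : G.Adj a w := har w rfl
          refine ⟨{u, a}, {a}, Set.toFinite _, Set.finite_singleton a,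
            SimpleGraph.isClique_pair.mpr (fun _ => hau.symm),
            SimpleGraph.isClique_singleton a, by simp,
            ?_, ?_⟩
          · rw [link_edge htri hau.symm]
            simp only [Set.empty_union]
            apply Set.eq_of_subset_of_subset
            · rintro b ⟨hbl, hbr⟩
              have hbu : G.Adj b u := hbl u rfl
              have hbw : G.Adj b w := hbr w rfl
              exact (common_unique htri hsq huw hadj hbu hbw hau haw : b = a)
            · rintro b rfl
              exact ⟨hal, har⟩
          · rw [link_edge htri hau.symm]
            simp
        · push_neg at hL
          obtain ⟨P, h1, h2, h3, h4⟩ := exists_emptyLink_mem htri u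
          refine ⟨P, ∅, h1, Set.finite_empty, h2, SimpleGraph.isClique_empty,
            Set.singleton_subset_iff.mpr h3, ?_, by simp⟩
          rw [h4]
          simp only [Set.union_empty]
          apply Set.eq_empty_iff_forall_notMem.mpr
          intro a ⟨hal, har⟩
          exact hL a ⟨hal, har⟩
    · -- S is an edge: link S = ∅
      obtain ⟨P, h1, h2, h3, h4⟩ := exists_emptyLink htri hS
      refine ⟨P, ∅, h1, Set.finite_empty, h2, SimpleGraph.isClique_empty, h3, ?_, by simp⟩
      rw [h4, hSuv, link_edge htri huv]
      simp
  · -- Φ is an edge : link Φ = ∅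
    subst hΦpq
    obtain ⟨P, h1, h2, h3, h4⟩ := exists_emptyLink htri hS
    refine ⟨P, ∅, h1, Set.finite_empty, h2, SimpleGraph.isClique_empty, h3, ?_, by simp⟩
    rw [h4, link_edge htri hpq]
    simp
end

section
/- Let G be a group with finite generating set S, and let π : G → G̃ be a surjective homomorphism whose injectivity radius with respect to S is at least 2E, for some E ≥ 0. If F̃ ≤ G̃ is a subgroup contained in the ball of radius E around the identity of G̃ (in the word metric for π(S)), then F̃ is the isomorphic image under π of a subgroup F ≤ G of order at most |S|^{2E+1}; in particular F̃ is finite. -/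
/-- `inBall S r g` means `g` lies in the ball of radius `r` around the identity in
the word metric on the group generated by `S` (letters from `S ∪ S⁻¹`). -/
def inBall {G : Type*} [Group G] (S : Set G) (r : ℕ) (g : G) : Prop :=
  ∃ l : List G, (∀ x ∈ l, x ∈ S ∨ x⁻¹ ∈ S) ∧ l.length ≤ r ∧ l.prod = g

/-!
Every element of `F̃` has a preimage in the ball of radius `E`; let `F` be the set of all such
short preimages. The product of two elements of `F` lies in the ball of radius `2E` and maps into
`F̃`, so by injectivity on that ball it coincides with the short preimage of its image: `F` is a
subgroup, mapped bijectively onto `F̃`. Being inside the ball of radius `E`, it has at most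
`(2|S| + 1)^E` elements.
-/

open Pointwise

section WordBall

variable {G Q : Type*} [Group G] [Group Q] {S : Set G} {r r' : ℕ} {g h : G}

lemma inBall_one (S : Set G) (r : ℕ) : inBall S r 1 := ⟨[], by simp, by simp, by simp⟩

lemma inBall_of_mem (hg : g ∈ S) : inBall S 1 g := ⟨[g], by simp [hg], by simp, by simp⟩

lemma inBall.mono (hr : r ≤ r') (hg : inBall S r g) : inBall S r' g := by
  obtain ⟨l, hl, hlen, rfl⟩ := hg
  exact ⟨l, hl, hlen.trans hr, rfl⟩

lemma inBall.mul (hg : inBall S r g) (hh : inBall S r' h) : inBall S (r + r') (g * h) := by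
  obtain ⟨l, hl, hlen, rfl⟩ := hg
  obtain ⟨m, hm, hmlen, rfl⟩ := hh
  refine ⟨l ++ m, ?_, by simpa using Nat.add_le_add hlen hmlen, List.prod_append⟩
  intro x hx
  rcases List.mem_append.1 hx with hx | hx
  exacts [hl x hx, hm x hx]

lemma inBall.inv (hg : inBall S r g) : inBall S r g⁻¹ := by
  obtain ⟨l, hl, hlen, rfl⟩ := hg
  refine ⟨(l.map (·⁻¹)).reverse, ?_, by simpa using hlen, (List.prod_inv_reverse l).symm⟩
  simp only [List.mem_reverse, List.mem_map]
  rintro _ ⟨y, hy, rfl⟩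
  simpa [or_comm] using hl y hy

lemma inBall.exists_preimage (π : G →* Q) {q : Q} (hq : inBall (π '' S) r q) :
    ∃ g, inBall S r g ∧ π g = q := by
  obtain ⟨l, hl, hlen, rfl⟩ := hq
  suffices ∃ g, inBall S l.length g ∧ π g = l.prod from
    let ⟨g, hg, hπg⟩ := this; ⟨g, hg.mono hlen, hπg⟩
  clear hlen
  induction l with
  | nil => exact ⟨1, inBall_one S 0, map_one π⟩
  | cons a t ih =>
    obtain ⟨g, hg, hπg⟩ := ih fun x hx => hl x (List.mem_cons_of_mem a hx)
    have ⟨s, hs, hπs⟩ : ∃ s, inBall S 1 s ∧ π s = a := by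
      rcases hl a List.mem_cons_self with ⟨s, hs, rfl⟩ | ⟨s, hs, hsa⟩
      · exact ⟨s, inBall_of_mem hs, rfl⟩
      · exact ⟨s⁻¹, (inBall_of_mem hs).inv, by rw [map_inv, hsa, inv_inv]⟩
    refine ⟨s * g, ?_, by rw [map_mul, hπs, hπg, List.prod_cons]⟩
    simpa [add_comm] using hs.mul hg

lemma inBall.mem_pow [DecidableEq G] {S : Finset G} (hg : inBall (S : Set G) r g) :
    g ∈ (S ∪ S⁻¹ ∪ 1) ^ r := by
  obtain ⟨l, hl, hlen, rfl⟩ := hg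
  refine Finset.pow_subset_pow_right (by simp) hlen ?_
  clear hlen
  induction l with
  | nil => simp
  | cons a t ih =>
    have ha : a ∈ S ∪ S⁻¹ ∪ 1 := by
      rcases hl a List.mem_cons_self with ha | ha <;> simp [Finset.mem_coe.1 ha]
    rw [List.prod_cons, List.length_cons, pow_succ']
    exact Finset.mul_mem_mul ha (ih fun x hx => hl x (List.mem_cons_of_mem a hx))

lemma finite_and_natCard_le_of_forall_inBall (S : Finset G) {A : Set G}
    (hA : ∀ g ∈ A, inBall (S : Set G) r g) : A.Finite ∧ Nat.card A ≤ (2 * S.card + 1) ^ r := by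
  classical
  have hsub : A ⊆ ↑((S ∪ S⁻¹ ∪ 1) ^ r) := fun g hg => (hA g hg).mem_pow
  have hcard : (S ∪ S⁻¹ ∪ 1).card ≤ 2 * S.card + 1 := by
    calc (S ∪ S⁻¹ ∪ 1).card ≤ S.card + S⁻¹.card + (1 : Finset G).card :=
          (Finset.card_union_le _ _).trans (by grw [Finset.card_union_le])
      _ = 2 * S.card + 1 := by rw [Finset.card_inv, Finset.card_one]; ring
  refine ⟨(Finset.finite_toSet _).subset hsub, ?_⟩
  calc Nat.card A ≤ ((S ∪ S⁻¹ ∪ 1) ^ r).card :=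
        (Nat.card_mono (Finset.finite_toSet _) hsub).trans_eq (Nat.card_eq_finsetCard _)
    _ ≤ (S ∪ S⁻¹ ∪ 1).card ^ r := Finset.card_pow_le
    _ ≤ (2 * S.card + 1) ^ r := Nat.pow_le_pow_left hcard r

end WordBall

section ShortLift

variable {G Q : Type*} [Group G] [Group Q] {S : Set G} {π : G →* Q} {E : ℕ} {Ft : Subgroup Q}

def shortLift (hinj : ∀ g h : G, inBall S (2 * E) g → inBall S (2 * E) h → π g = π h → g = h)
    (hFt : ∀ q ∈ Ft, inBall (π '' S) E q) : Subgroup G where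
  carrier := {g | inBall S E g ∧ π g ∈ Ft}
  one_mem' := ⟨inBall_one S E, by simp⟩
  mul_mem' := by
    rintro a b ⟨ha, hπa⟩ ⟨hb, hπb⟩
    have hπab : π (a * b) ∈ Ft := by simpa using mul_mem hπa hπb
    obtain ⟨c, hc, hπc⟩ := (hFt _ hπab).exists_preimage π
    have hab : inBall S (2 * E) (a * b) := by simpa [two_mul] using ha.mul hb
    rw [hinj _ _ hab (hc.mono (by omega)) hπc.symm]
    exact ⟨hc, hπc ▸ hπab⟩
  inv_mem' := by
    rintro a ⟨ha, hπa⟩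
    exact ⟨ha.inv, by simpa using hπa⟩

variable (hinj : ∀ g h : G, inBall S (2 * E) g → inBall S (2 * E) h → π g = π h → g = h)
  (hFt : ∀ q ∈ Ft, inBall (π '' S) E q)

lemma inBall_of_mem_shortLift {g : G} (hg : g ∈ shortLift hinj hFt) : inBall S E g := hg.1

lemma bijOn_shortLift : Set.BijOn π (shortLift hinj hFt : Set G) Ft := by
  refine ⟨fun g hg => hg.2, ?_, fun q hq => ?_⟩
  · rintro a ⟨ha, -⟩ b ⟨hb, -⟩ hab
    exact hinj a b (ha.mono (by omega)) (hb.mono (by omega)) hab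
  · obtain ⟨g, hg, rfl⟩ := (hFt q hq).exists_preimage π
    exact ⟨g, ⟨hg, hq⟩, rfl⟩

end ShortLift

theorem subgroup_in_ball_lifts_general {G Q : Type*} [Group G] [Group Q]
    (S : Finset G)
    (π : G →* Q) (E : ℕ)
    (hinj : ∀ g h : G, inBall (S : Set G) (2 * E) g → inBall (S : Set G) (2 * E) h →
      π g = π h → g = h)
    (Ftilde : Subgroup Q) (hFt : ∀ q ∈ Ftilde, inBall (π '' (S : Set G)) E q) :
    ∃ F : Subgroup G, Set.BijOn π (F : Set G) (Ftilde : Set Q) ∧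
      Nat.card F ≤ (2 * S.card + 1) ^ (2 * E + 1) ∧ Finite Ftilde := by
  have hbij := bijOn_shortLift hinj hFt
  obtain ⟨hfin, hcard⟩ := finite_and_natCard_le_of_forall_inBall S (A := shortLift hinj hFt)
    fun _ => inBall_of_mem_shortLift hinj hFt
  refine ⟨shortLift hinj hFt, hbij, ?_, ?_⟩
  · exact hcard.trans (Nat.pow_le_pow_right (by omega) (by omega))
  · exact (hbij.image_eq ▸ hfin.image π).to_subtype

/-- If `π : G ↠ G̃` has injectivity radius at least `2E` with respect to a finite
generating set `S`, then any subgroup `F̃ ≤ G̃` contained in the ball of radius `E`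
around the identity of `G̃` is the isomorphic image under `π` of a subgroup `F ≤ G`
of uniformly bounded order; in particular `F̃` is finite. -/
theorem subgroup_in_ball_lifts {G Q : Type*} [Group G] [Group Q]
    (S : Finset G) (hgen : Subgroup.closure (S : Set G) = ⊤)
    (π : G →* Q) (hsurj : Function.Surjective π) (E : ℕ)
    (hinj : ∀ g h : G, inBall (S : Set G) (2 * E) g → inBall (S : Set G) (2 * E) h →
      π g = π h → g = h)
    (Ftilde : Subgroup Q) (hFt : ∀ q ∈ Ftilde, inBall (π '' (S : Set G)) E q) :
    ∃ F : Subgroup G, Set.BijOn π (F : Set G) (Ftilde : Set Q) ∧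
      Nat.card F ≤ (2 * S.card + 1) ^ (2 * E + 1) ∧ Finite Ftilde :=
  subgroup_in_ball_lifts_general S π E hinj Ftilde hFt
end

section
/- An infinite virtually cyclic group surjects onto either ℤ or the infinite dihedral group D∞ ≅ ℤ/2 ∗ ℤ/2. -/
/-!
Replace the cyclic subgroup by its normal core `⟨a⟩`: it is infinite cyclic, normal and of finite
index, so conjugation acts on it through a character `ε : G → ℤˣ`, `g a g⁻¹ = a ^ ε g`. The
element `a` is central in `ker ε`, so the transfer from `ker ε` to `⟨a⟩ ≅ ℤ` sends `a` to
`a ^ index ≠ 1`. If `ε` is trivial, this is a nonzero map `G → ℤ`, and dividing it by the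
generator of its image makes it onto. Otherwise take `t` with `ε t = -1`: antisymmetrising the
transfer under conjugation by `t` gives a surjection `ψ : ker ε → ℤ` with
`ψ (t k t⁻¹) = -ψ k`, which extends to a crossed homomorphism `c : G → ℤ` twisted by `ε`. Then
`g ↦ (x ↦ ε g * x + c g)` maps `G` onto the isometry group `D∞` of `ℤ`.
-/

open Subgroup Function

section

variable {G : Type*} [Group G]

theorem Subgroup.exists_zpowers_normal_finiteIndex [Infinite G] (H : Subgroup G) [IsCyclic H]
    [H.FiniteIndex] : ∃ a : G, ¬IsOfFinOrder a ∧ (zpowers a).Normal ∧ (zpowers a).FiniteIndex := by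
  obtain ⟨a, ha⟩ := (Subgroup.isCyclic_iff_exists_zpowers_eq_top H.normalCore).mp
    (isCyclic_of_le H.normalCore_le)
  have : (zpowers a).FiniteIndex := ha ▸ H.finiteIndex_normalCore
  refine ⟨a, ?_, ha ▸ H.normalCore_normal, this⟩
  have hcard := card_mul_index (zpowers a)
  rw [Nat.card_eq_zero_of_infinite (α := G), Nat.card_zpowers] at hcard
  exact orderOf_eq_zero_iff.mp <| (mul_eq_zero.mp hcard).resolve_right FiniteIndex.index_ne_zero

theorem exists_units_monoidHom_conj_eq_zpow {a : G} (ha : ¬IsOfFinOrder a) [(zpowers a).Normal] :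
    ∃ ε : G →* ℤˣ, ∀ g, g * a * g⁻¹ = a ^ (ε g : ℤ) := by
  have hinj := injective_zpow_iff_not_isOfFinOrder.mpr ha
  have hconj (g : G) : ∃ m : ℤ, g * a * g⁻¹ = a ^ m :=
    (mem_zpowers_iff.mp (Normal.conj_mem inferInstance a (mem_zpowers a) g)).imp fun _ => Eq.symm
  have hunit (g : G) : ∃ u : ℤˣ, g * a * g⁻¹ = a ^ (u : ℤ) := by
    obtain ⟨m, hm⟩ := hconj g
    obtain ⟨n, hn⟩ := hconj g⁻¹
    have hmn : m * n = 1 := hinj <| by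
      calc a ^ (m * n) = (g * a * g⁻¹) ^ n := by rw [hm, zpow_mul]
        _ = g * (g⁻¹ * a * g⁻¹⁻¹) * g⁻¹ := by rw [conj_zpow, hn]
        _ = a ^ (1 : ℤ) := by group
    exact ⟨Units.mkOfMulEqOne m n hmn, hm⟩
  choose ε hε using hunit
  refine ⟨MonoidHom.mk' ε fun g h => Units.ext <| hinj ?_, hε⟩
  simp only [Units.val_mul, zpow_mul, ← hε]
  rw [conj_zpow, ← hε]
  group

theorem MonoidHom.transfer_eq_pow_index_of_le_center {A : Type*} [CommGroup A] {H : Subgroup G}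
    [H.FiniteIndex] (hH : H ≤ center G) (ϕ : H →* A) (h : H) :
    ϕ.transfer h = ϕ h ^ H.index := by
  rw [ϕ.transfer_eq_pow h fun k g₀ _ => ?_, ← map_pow]
  · rfl
  · rw [mem_center_iff.mp (pow_mem (hH h.2) k) g₀⁻¹, inv_mul_cancel_right]

theorem exists_monoidHom_int_ne_one_of_mem_center {a : G} (ha : ¬IsOfFinOrder a)
    (hac : a ∈ center G) [(zpowers a).FiniteIndex] :
    ∃ τ : G →* Multiplicative ℤ, τ a ≠ 1 := by
  have : Infinite (zpowers a) := (infinite_zpowers.mpr ha).to_subtype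
  let ϕ : zpowers a →* Multiplicative ℤ := intCyclicMulEquiv.symm.toMonoidHom
  have hϕa : ϕ ⟨a, mem_zpowers a⟩ ≠ 1 := by
    simpa [ϕ] using fun h : a = 1 => ha (h ▸ IsOfFinOrder.one)
  have h := ϕ.transfer_eq_pow_index_of_le_center (zpowers_le.mpr hac) ⟨a, mem_zpowers a⟩
  exact ⟨ϕ.transfer, h.trans_ne <| (pow_eq_one_iff_left FiniteIndex.index_ne_zero).not.mpr hϕa⟩

theorem exists_monoidHom_int_ne_one_of_le_centralizer {a : G} (ha : ¬IsOfFinOrder a)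
    [(zpowers a).FiniteIndex] {K : Subgroup G} (haK : a ∈ K) (hK : K ≤ centralizer {a}) :
    ∃ τ : K →* Multiplicative ℤ, τ ⟨a, haK⟩ ≠ 1 := by
  let b : K := ⟨a, haK⟩
  have hb : ¬IsOfFinOrder b := by rwa [← orderOf_eq_zero_iff, orderOf_mk, orderOf_eq_zero_iff]
  have hbc : b ∈ center K :=
    mem_center_iff.mpr fun k => Subtype.ext (mem_centralizer_singleton_iff.mp (hK k.2))
  have : (zpowers b).FiniteIndex := by
    rw [← comap_map_eq_self_of_injective K.subtype_injective (zpowers b), K.subtype.map_zpowers]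
    exact instFiniteIndex_subgroupOf (zpowers a) K
  exact exists_monoidHom_int_ne_one_of_mem_center hb hbc

theorem MonoidHom.exists_surjective_injective_comp_eq (f : G →* Multiplicative ℤ) (hf : f ≠ 1) :
    ∃ ψ : G →* Multiplicative ℤ, Surjective ψ ∧
      ∃ ι : Multiplicative ℤ →* Multiplicative ℤ, Injective ι ∧ ι.comp ψ = f := by
  obtain ⟨g, hg⟩ : ∃ g, f g ≠ 1 := by simpa [DFunLike.ext_iff] using hf
  have : Infinite f.range := Set.Infinite.to_subtype <|
    (infinite_zpowers.mpr <| (isOfFinOrder_iff_eq_one _).not.mpr hg).mono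
      (zpowers_le.mpr ⟨g, rfl⟩)
  let e : Multiplicative ℤ ≃* f.range := intCyclicMulEquiv
  refine ⟨e.symm.toMonoidHom.comp f.rangeRestrict,
    e.symm.surjective.comp f.rangeRestrict_surjective,
    f.range.subtype.comp e.toMonoidHom, f.range.subtype_injective.comp e.injective, ?_⟩
  ext x
  simp

theorem exists_surjective_conjNormal_eq_inv {K : Subgroup G} [K.Normal]
    (τ : K →* Multiplicative ℤ) {t : G} (ht : t * t ∈ K) {k₀ : K}
    (hk₀ : MulAut.conjNormal t k₀ = k₀⁻¹) (hτ : τ k₀ ≠ 1) :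
    ∃ ψ : K →* Multiplicative ℤ, Surjective ψ ∧ ∀ k, ψ (MulAut.conjNormal t k) = (ψ k)⁻¹ := by
  let f : K →* Multiplicative ℤ := τ / τ.comp (MulAut.conjNormal t).toMonoidHom
  have hττ (k : K) : τ (MulAut.conjNormal t (MulAut.conjNormal t k)) = τ k := by
    rw [← MulAut.mul_apply, ← map_mul,
      show MulAut.conjNormal (t * t) k = ⟨t * t, ht⟩ * k * ⟨t * t, ht⟩⁻¹ from
        Subtype.ext (by simp [mul_assoc]),
      map_mul, map_mul, map_inv, mul_inv_cancel_comm]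
  have hf (k : K) : f (MulAut.conjNormal t k) = (f k)⁻¹ := by simp [f, hττ]
  have hf1 : f ≠ 1 := fun h => hτ <| by
    simpa [f, hk₀, ← sq] using DFunLike.congr_fun h k₀
  obtain ⟨ψ, hψ, ι, hι, hιψ⟩ := f.exists_surjective_injective_comp_eq hf1
  refine ⟨ψ, hψ, fun k => hι ?_⟩
  simpa [← hιψ] using hf k

theorem exists_crossedHom_extending (ε : G →* ℤˣ) {t : G} (ht : ε t = -1)
    (ψ : ε.ker →* Multiplicative ℤ) (hψ : ∀ k, ψ (MulAut.conjNormal t k) = (ψ k)⁻¹) :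
    ∃ c : G → ℤ, (∀ g h, c (g * h) = c g + ε g * c h) ∧ ∀ k : ε.ker, c k = (ψ k).toAdd := by
  have hk (k : ε.ker) : ε k = 1 := k.2
  have hmem {g : G} (hg : g ∉ ε.ker) : g * t⁻¹ ∈ ε.ker := by
    simp_all [MonoidHom.mem_ker, (Int.units_eq_one_or (ε g)).resolve_left hg]
  have hkt (k : ε.ker) : (k : G) * t ∉ ε.ker := by simp [MonoidHom.mem_ker, ht, hk]
  let c : G → ℤ := fun g =>
    if hg : g ∈ ε.ker then (ψ ⟨g, hg⟩).toAdd else (ψ ⟨g * t⁻¹, hmem hg⟩).toAdd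
  have hc (k : ε.ker) : c k = (ψ k).toAdd := dif_pos k.2
  have hct (k : ε.ker) : c (k * t) = (ψ k).toAdd := by
    simp only [c, dif_neg (hkt k), mul_inv_cancel_right]
  let s : ε.ker := ⟨t * t, by simp [MonoidHom.mem_ker, ht]⟩
  have hs : ψ s = 1 := self_eq_inv.mp <| by
    simpa [show MulAut.conjNormal t s = s from Subtype.ext (by simp [s, mul_assoc])] using hψ s
  have hrep (g : G) : (∃ k : ε.ker, (k : G) = g) ∨ ∃ k : ε.ker, k * t = g := by
    by_cases hg : g ∈ ε.ker
    · exact .inl ⟨⟨g, hg⟩, rfl⟩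
    · exact .inr ⟨⟨g * t⁻¹, hmem hg⟩, inv_mul_cancel_right g t⟩
  refine ⟨c, fun g h => ?_, hc⟩
  rcases hrep g with ⟨k, rfl⟩ | ⟨k, rfl⟩ <;> rcases hrep h with ⟨l, rfl⟩ | ⟨l, rfl⟩
  · rw [← coe_mul, hc, hc, hc]
    simp [hk]
  · rw [← mul_assoc, ← coe_mul, hct, hct, hc]
    simp [hk]
  · rw [show (k : G) * t * l = ↑(k * MulAut.conjNormal t l) * t by simp; group, hct, hc, hct]
    simp [hψ, ht, hk]
  · rw [show (k : G) * t * (l * t) = ↑(k * MulAut.conjNormal t l * s) by simp [s]; group,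
      hc, hct, hct]
    simp [hψ, hs, ht, hk]

/-- `DihedralGroup 0` is the isometry group of `ℤ`, with `r i` acting as `x ↦ x + i` and `sr i` as
`x ↦ -i - x`; this sends `g` to `x ↦ ε g * x + c g`. -/
def dihedralHomOfCrossedHom (ε : G →* ℤˣ) (c : G → ℤ)
    (hc : ∀ g h, c (g * h) = c g + ε g * c h) : G →* DihedralGroup 0 where
  toFun g := if ε g = 1 then .r (Int.cast (c g)) else .sr (Int.cast (-c g))
  map_one' := by simp [show c 1 = 0 by simpa using hc 1 1]
  map_mul' g h := by
    rcases Int.units_eq_one_or (ε g) with hg | hg <;>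
      rcases Int.units_eq_one_or (ε h) with hh | hh <;>
      simp [hg, hh, hc, DihedralGroup.r_mul_r, DihedralGroup.r_mul_sr,
        DihedralGroup.sr_mul_r, DihedralGroup.sr_mul_sr] <;> ring

theorem dihedralHomOfCrossedHom_surjective (ε : G →* ℤˣ) (c : G → ℤ)
    (hc : ∀ g h, c (g * h) = c g + ε g * c h) (hker : ∀ n : ℤ, ∃ g, ε g = 1 ∧ c g = n)
    {t : G} (ht : ε t = -1) : Surjective (dihedralHomOfCrossedHom ε c hc) := by
  rintro (n | n) <;> obtain ⟨n, rfl⟩ := ZMod.intCast_surjective n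
  · obtain ⟨g, hg, rfl⟩ := hker n
    exact ⟨g, by simp [dihedralHomOfCrossedHom, hg]⟩
  · obtain ⟨g, hg, hgn⟩ := hker (-n - c t)
    exact ⟨g * t, by simp [dihedralHomOfCrossedHom, hg, ht, hc, hgn]⟩

theorem exists_surjective_dihedralGroup_of_conjNormal_eq_inv (ε : G →* ℤˣ) {t : G}
    (ht : ε t = -1) (ψ : ε.ker →* Multiplicative ℤ) (hψ : Surjective ψ)
    (hψt : ∀ k, ψ (MulAut.conjNormal t k) = (ψ k)⁻¹) :
    ∃ f : G →* DihedralGroup 0, Surjective f := by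
  obtain ⟨c, hc, hcψ⟩ := exists_crossedHom_extending ε ht ψ hψt
  refine ⟨dihedralHomOfCrossedHom ε c hc,
    dihedralHomOfCrossedHom_surjective ε c hc (fun n => ?_) ht⟩
  obtain ⟨k, hk⟩ := hψ (.ofAdd n)
  exact ⟨k, k.2, by rw [hcψ, hk, toAdd_ofAdd]⟩

end

/-- An infinite virtually cyclic group surjects onto either `ℤ` or the infinite
dihedral group `D∞` (which is `DihedralGroup 0` in Mathlib). -/
theorem infinite_virtuallyCyclic_surjects {G : Type*} [Group G] [Infinite G]
    (H : Subgroup G) (hc : IsCyclic H) (hf : H.FiniteIndex) :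
    (∃ f : G →* Multiplicative ℤ, Function.Surjective f) ∨
    (∃ f : G →* DihedralGroup 0, Function.Surjective f) := by
  obtain ⟨a, ha, _, _⟩ := H.exists_zpowers_normal_finiteIndex
  obtain ⟨ε, hε⟩ := exists_units_monoidHom_conj_eq_zpow ha
  have hcomm {g : G} (hg : ε g = 1) : g * a = a * g := by
    simpa [hg, mul_inv_eq_iff_eq_mul] using hε g
  by_cases hε1 : ∀ g, ε g = 1
  · left
    obtain ⟨τ, hτ⟩ := exists_monoidHom_int_ne_one_of_mem_center ha
      (mem_center_iff.mpr fun g => hcomm (hε1 g))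
    obtain ⟨ψ, hψ, -⟩ := τ.exists_surjective_injective_comp_eq (by rintro rfl; exact hτ rfl)
    exact ⟨ψ, hψ⟩
  · right
    obtain ⟨t, ht⟩ := not_forall.mp hε1
    replace ht : ε t = -1 := (Int.units_eq_one_or _).resolve_left ht
    have haK : a ∈ ε.ker := Units.ext <| (injective_zpow_iff_not_isOfFinOrder.mpr ha) <| by
      simpa using (hε a).symm
    obtain ⟨τ, hτ⟩ := exists_monoidHom_int_ne_one_of_le_centralizer ha haK
      fun k hk => mem_centralizer_singleton_iff.mpr (hcomm hk)
    obtain ⟨ψ, hψ, hψt⟩ := exists_surjective_conjNormal_eq_inv τ (t := t)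
      (by simp [MonoidHom.mem_ker]) (Subtype.ext (by simp [hε t, ht])) hτ
    exact exists_surjective_dihedralGroup_of_conjNormal_eq_inv ε ht ψ hψ hψt
end

section
/- Let G be a group acting by isometries on a metric space W, and suppose every finite subgroup of the isometry group of W has an orbit of diameter at most E₁ (as holds for E₀-coarsely injective spaces with E₁ depending only on E₀). Suppose further that some orbit map g ↦ g·w from G with word metric d_S to W is a K-quasi-isometry. Then there is a constant E₄ = E₄(K, E₁) such that every finite subgroup F of G has a conjugate contained in the ball of radius E₄ around the identity in (G, d_S); consequently |F| ≤ |ball of radius E₄| ≤ (2|S|+1)^{E₄}. -/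
/-- The word distance associated to a generating set `S`. -/
noncomputable def wordDist {G : Type*} [Group G] (S : Set G) (g h : G) : ℕ :=
  sInf {r : ℕ | inBall S r (g⁻¹ * h)}


lemma inBall_mono {G : Type*} [Group G] (S : Set G) {r r' : ℕ} (h : r ≤ r') {g : G} :
    inBall S r g → inBall S r' g := fun ⟨l, h1, h2, h3⟩ => ⟨l, h1, h2.trans h, h3⟩

/-- Suppose `G` acts by isometries on a metric space `W`, every finite subgroup of
`G` has an orbit in `W` of diameter at most `E₁`, and some orbit map `g ↦ g • w` is a
`K`-quasi-isometry from `(G, d_S)` to `W`. Then there is `E₄ = E₄(K, E₁)` such that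
every finite subgroup `F ≤ G` has a conjugate contained in the ball of radius `E₄`
around the identity; consequently `|F| ≤ (2|S|+1)^{E₄}`. -/
theorem finite_subgroups_uniformly_bounded {G W : Type*} [Group G] [MetricSpace W]
    [MulAction G W] (hiso : ∀ g : G, Isometry (fun x : W => g • x))
    (S : Finset G) (hgen : Subgroup.closure (S : Set G) = ⊤)
    (hsymm : ∀ s ∈ S, s⁻¹ ∈ (S : Set G))
    (E₁ : ℝ) (hE₁ : 0 ≤ E₁)
    (horb : ∀ F : Subgroup G, Finite F → ∃ x : W, ∀ f ∈ F, ∀ g ∈ F,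
      dist (f • x) (g • x) ≤ E₁)
    (K : ℝ) (hK : 1 ≤ K) (w : W)
    (hqi : ∀ g h : G,
      (wordDist (S : Set G) g h : ℝ) / K - K ≤ dist (g • w) (h • w) ∧
      dist (g • w) (h • w) ≤ K * (wordDist (S : Set G) g h : ℝ) + K)
    (hcob : ∀ x : W, ∃ g : G, dist (g • w) x ≤ K) :
    ∃ E₄ : ℕ, ∀ F : Subgroup G, Finite F →
      (∃ h : G, ∀ f ∈ F, inBall (S : Set G) E₄ (h⁻¹ * f * h)) ∧
      Nat.card F ≤ (2 * S.card + 1) ^ E₄ := by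
  classical
  have hK0 : (0:ℝ) < K := lt_of_lt_of_le one_pos hK
  set E₄ := ⌈K * (E₁ + 3 * K)⌉₊ with hE₄def
  refine ⟨E₄, fun F hF => ?_⟩
  obtain ⟨x, hx⟩ := horb F hF
  obtain ⟨h, hh⟩ := hcob x
  have key : ∀ f ∈ F, inBall (S : Set G) E₄ (h⁻¹ * f * h) := by
    intro f hf
    have hdist : dist (h • w) ((f * h) • w) ≤ E₁ + 2 * K := by
      have h2 : dist x (f • x) ≤ E₁ := by
        have := hx f hf 1 F.one_mem
        simpa [dist_comm] using this
      have h3 : dist (f • x) ((f*h) • w) = dist x (h • w) := by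
        rw [mul_smul]
        exact (hiso f).dist_eq x (h • w)
      calc dist (h • w) ((f*h) • w)
          ≤ dist (h • w) x + dist x (f • x) + dist (f • x) ((f*h) • w) :=
            dist_triangle4 _ _ _ _
        _ ≤ K + E₁ + K := by
            rw [h3, dist_comm x (h • w)]
            have := hh
            linarith
        _ = E₁ + 2 * K := by ring
    have hlow := (hqi h (f * h)).1
    set N := wordDist (S : Set G) h (f * h) with hN
    have hdiv : (N : ℝ) / K ≤ E₁ + 3 * K := by linarith
    have hNle : (N : ℝ) ≤ K * (E₁ + 3 * K) := by
      have := (div_le_iff₀ hK0).mp hdiv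
      calc (N:ℝ) ≤ (E₁ + 3*K) * K := this
        _ = K * (E₁ + 3*K) := by ring
    have hNE : N ≤ E₄ := by
      have : (N : ℝ) ≤ (E₄ : ℝ) := hNle.trans (Nat.le_ceil _)
      exact_mod_cast this
    have hmem : h⁻¹ * (f * h) ∈ Subgroup.closure (S : Set G) := by rw [hgen]; trivial
    have hmem' : h⁻¹ * (f * h) ∈ Submonoid.closure ((S : Set G) ∪ (S : Set G)⁻¹) := by
      rw [← Subgroup.closure_toSubmonoid] at *
      exact hmem
    obtain ⟨l, hl1, hl2⟩ := Submonoid.exists_list_of_mem_closure hmem'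
    have hne : {r : ℕ | inBall (S : Set G) r (h⁻¹ * (f * h))}.Nonempty := by
      refine ⟨l.length, l, ?_, le_refl _, hl2⟩
      intro y hy
      rcases hl1 y hy with h' | h'
      · exact Or.inl h'
      · exact Or.inr (Set.mem_inv.mp h')
    have hNmem : inBall (S : Set G) N (h⁻¹ * (f * h)) := Nat.sInf_mem hne
    have : inBall (S : Set G) E₄ (h⁻¹ * (f * h)) := inBall_mono _ hNE hNmem
    simpa [mul_assoc] using this
  refine ⟨⟨h, key⟩, ?_⟩
  -- counting
  have hlist : ∀ f : F, ∃ l : List G, (∀ y ∈ l, y ∈ insert (1:G) S) ∧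
      l.length = E₄ ∧ l.prod = h⁻¹ * (f : G) * h := by
    intro f
    obtain ⟨l, hl1, hl2, hl3⟩ := key f f.2
    refine ⟨l ++ List.replicate (E₄ - l.length) 1, ?_, ?_, ?_⟩
    · intro y hy
      rcases List.mem_append.mp hy with hy | hy
      · rcases hl1 y hy with h' | h'
        · exact Finset.mem_insert_of_mem h'
        · have := hsymm _ h'
          simpa using Finset.mem_insert_of_mem this
      · simp [List.eq_of_mem_replicate hy]
    · simp [Nat.add_sub_cancel' hl2]
    · simp [hl3]
  choose L hL1 hL2 hL3 using hlist
  let T : Finset G := insert (1:G) S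
  let φ : F → (Fin E₄ → T) := fun f i =>
    ⟨(L f)[(i : ℕ)]'(by rw [hL2 f]; exact i.2),
      hL1 f _ (List.getElem_mem _)⟩
  have hinj : Function.Injective φ := by
    intro f₁ f₂ hfe
    have hL : L f₁ = L f₂ := by
      apply List.ext_getElem ((hL2 f₁).trans (hL2 f₂).symm)
      intro n h1 h2
      have := congrFun hfe ⟨n, (hL2 f₁) ▸ h1⟩
      simpa [φ, Subtype.ext_iff] using this
    have hp : h⁻¹ * (f₁:G) * h = h⁻¹ * (f₂:G) * h := by
      rw [← hL3 f₁, ← hL3 f₂, hL]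
    have hff : (f₁ : G) = f₂ := by
      have := mul_right_cancel hp
      exact mul_left_cancel this
    exact Subtype.ext hff
  have hcard1 : Nat.card F ≤ Nat.card (Fin E₄ → T) :=
    Nat.card_le_card_of_injective φ hinj
  have hcard2 : Nat.card (Fin E₄ → T) = T.card ^ E₄ := by
    simp [Nat.card_eq_fintype_card, Fintype.card_fun, Fintype.card_coe]
  have hT : T.card ≤ S.card + 1 := by
    simpa using Finset.card_insert_le (1:G) S
  calc Nat.card F ≤ T.card ^ E₄ := hcard2 ▸ hcard1
    _ ≤ (2 * S.card + 1) ^ E₄ := Nat.pow_le_pow_left (by omega) _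
end
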